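/- arXiv:1909.04801 — 2 statements merged into one kernel-verified Lean document; each statement's English description precedes it below -/
import Mathlib

section
/- Let Ψ = (Ψ_L, Ψ_R) ∈ ℝ^{m×2n} have the (2s, δ)-RIP, where Ψ_L, Ψ_R ∈ ℝ^{m×n}. Fix vectors x, y ∈ ℝ^n and a partition of [n] into consecutive blocks I₁,…,I_r of size at most s (sorted by decreasing magnitude of entries of x) and the analogous partition J₁,…,J_r for y. For any sign vector d ∈ {−1,1}^n, the quantity w = Σ_{p=1}^{r} d(I_p)ᵀ D_{x(I_p)} Ψ_L(:,I_p)ᵀ Ψ_R(:,J_p) D_{y(J_p)} d(J_p) satisfies |w| ≤ δ·‖x‖₂·‖y‖₂. -/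
/-! Each block term is `⟪Ψ_L u, Ψ_R v⟫` for vectors `u = d ⊙ x` restricted to `I_p` and
`v = y ⊙ d` restricted to `J_p`, supported on at most `s` columns of each half of `Ψ`.
Polarization turns the RIP of `Ψ` into `|⟪Ψ_L u, Ψ_R v⟫| ≤ δ/2 (‖u‖² + ‖v‖²)`, and rescaling
`u, v` to unit vectors improves this to `δ ‖u‖ ‖v‖`. Summing over the blocks, Cauchy–Schwarz in
`p` gives `δ (∑_p ‖x(I_p)‖²)^{1/2} (∑_p ‖y(J_p)‖²)^{1/2} = δ ‖x‖ ‖y‖`. -/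

open Matrix Finset

/-- `Ψ` has the `(T, δ)`-restricted isometry property. -/
def HasRIP {m ι : Type*} [Fintype m] [Fintype ι] (Ψ : Matrix m ι ℝ) (T : ℕ) (δ : ℝ) : Prop :=
  ∀ x : ι → ℝ, (Finset.univ.filter fun i => x i ≠ 0).card ≤ T →
    |∑ a, (Ψ.mulVec x a) ^ 2 - ∑ i, (x i) ^ 2| ≤ δ * ∑ i, (x i) ^ 2

lemma card_filter_sumElim_ne_zero {ι κ M : Type*} [Fintype ι] [Fintype κ] [Zero M]
    [DecidableEq M] (u : ι → M) (v : κ → M) :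
    (univ.filter fun i => Sum.elim u v i ≠ 0).card
      = (univ.filter fun i => u i ≠ 0).card + (univ.filter fun j => v j ≠ 0).card := by
  rw [← card_disjSum]
  congr 1
  ext z
  cases z <;> simp

lemma sum_sum_mul_gram_mul_eq_dotProduct {m ι κ : Type*} [Fintype m] [Fintype ι] [Fintype κ]
    (A : Matrix m ι ℝ) (B : Matrix m κ ℝ) (u : ι → ℝ) (v : κ → ℝ) :
    ∑ i, ∑ j, u i * (∑ a, A a i * B a j) * v j = (A *ᵥ u) ⬝ᵥ (B *ᵥ v) := by
  simp only [dotProduct, mulVec, sum_mul, mul_sum]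
  rw [sum_comm_cycle]
  refine sum_congr rfl fun a _ => ?_
  rw [sum_comm]
  exact sum_congr rfl fun j _ => sum_congr rfl fun i _ => by ring

lemma dotProduct_self_pos_of_ne_zero {α : Type*} [Fintype α] {w : α → ℝ} (hw : w ≠ 0) :
    0 < w ⬝ᵥ w := by
  simpa using dotProduct_self_star_pos_iff.mpr hw

lemma inv_sqrt_smul_dotProduct_self {α : Type*} [Fintype α] {w : α → ℝ} (hw : w ≠ 0) :
    ((√(w ⬝ᵥ w))⁻¹ • w) ⬝ᵥ ((√(w ⬝ᵥ w))⁻¹ • w) = 1 := by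
  have hpos := dotProduct_self_pos_of_ne_zero hw
  rw [smul_dotProduct, dotProduct_smul, smul_smul, smul_eq_mul, ← mul_inv,
    Real.mul_self_sqrt hpos.le, inv_mul_cancel₀ hpos.ne']

section RIP

variable {m ι κ : Type*} [Fintype m] [Fintype ι] [Fintype κ]
  {Ψ_L : Matrix m ι ℝ} {Ψ_R : Matrix m κ ℝ} {s t : ℕ} {δ : ℝ}

lemma HasRIP.abs_fromCols_sumElim (hRIP : HasRIP (fromCols Ψ_L Ψ_R) (s + t) δ)
    {u : ι → ℝ} {v : κ → ℝ}
    (hu : (univ.filter fun i => u i ≠ 0).card ≤ s) (hv : (univ.filter fun j => v j ≠ 0).card ≤ t) :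
    |(Ψ_L *ᵥ u + Ψ_R *ᵥ v) ⬝ᵥ (Ψ_L *ᵥ u + Ψ_R *ᵥ v) - (u ⬝ᵥ u + v ⬝ᵥ v)|
      ≤ δ * (u ⬝ᵥ u + v ⬝ᵥ v) := by
  have h := hRIP (Sum.elim u v) (by rw [card_filter_sumElim_ne_zero]; omega)
  simpa only [fromCols_mulVec_sumElim, Fintype.sum_sum_type, Sum.elim_inl, Sum.elim_inr,
    dotProduct, sq] using h

lemma HasRIP.abs_dotProduct_mulVec_le (hRIP : HasRIP (fromCols Ψ_L Ψ_R) (s + t) δ)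
    {u : ι → ℝ} {v : κ → ℝ}
    (hu : (univ.filter fun i => u i ≠ 0).card ≤ s) (hv : (univ.filter fun j => v j ≠ 0).card ≤ t) :
    |(Ψ_L *ᵥ u) ⬝ᵥ (Ψ_R *ᵥ v)| ≤ δ / 2 * (u ⬝ᵥ u + v ⬝ᵥ v) := by
  have hplus := hRIP.abs_fromCols_sumElim hu hv
  have hminus := hRIP.abs_fromCols_sumElim hu (v := -v)
    (by simpa only [Pi.neg_apply, ne_eq, neg_eq_zero] using hv)
  set A := Ψ_L *ᵥ u
  set B := Ψ_R *ᵥ v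
  have hpolar : (A + B) ⬝ᵥ (A + B) - (A + -B) ⬝ᵥ (A + -B) = 4 * (A ⬝ᵥ B) := by
    simp only [add_dotProduct, dotProduct_add, neg_dotProduct, dotProduct_neg, dotProduct_comm B A]
    ring
  rw [mulVec_neg, neg_dotProduct_neg] at hminus
  rw [abs_le] at hplus hminus ⊢
  constructor <;> linarith [hplus.1, hplus.2, hminus.1, hminus.2]

lemma HasRIP.abs_dotProduct_mulVec_le_mul_sqrt (hRIP : HasRIP (fromCols Ψ_L Ψ_R) (s + t) δ)
    {u : ι → ℝ} {v : κ → ℝ}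
    (hu : (univ.filter fun i => u i ≠ 0).card ≤ s) (hv : (univ.filter fun j => v j ≠ 0).card ≤ t) :
    |(Ψ_L *ᵥ u) ⬝ᵥ (Ψ_R *ᵥ v)| ≤ δ * √(u ⬝ᵥ u) * √(v ⬝ᵥ v) := by
  rcases eq_or_ne u 0 with rfl | hu0
  · simp
  rcases eq_or_ne v 0 with rfl | hv0
  · simp
  have ha : 0 < √(u ⬝ᵥ u) := Real.sqrt_pos.mpr (dotProduct_self_pos_of_ne_zero hu0)
  have hb : 0 < √(v ⬝ᵥ v) := Real.sqrt_pos.mpr (dotProduct_self_pos_of_ne_zero hv0)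
  have hscaled := hRIP.abs_dotProduct_mulVec_le (u := (√(u ⬝ᵥ u))⁻¹ • u)
    (v := (√(v ⬝ᵥ v))⁻¹ • v) (by simpa [ha.ne'] using hu) (by simpa [hb.ne'] using hv)
  rw [inv_sqrt_smul_dotProduct_self hu0, inv_sqrt_smul_dotProduct_self hv0, mulVec_smul,
    mulVec_smul, smul_dotProduct, dotProduct_smul, smul_smul, smul_eq_mul, abs_mul,
    abs_of_nonneg (by positivity), ← mul_inv, inv_mul_le_iff₀ (by positivity)] at hscaled
  linarith

lemma HasRIP.abs_sum_sum_le (hRIP : HasRIP (fromCols Ψ_L Ψ_R) (s + t) δ)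
    {S : Finset ι} {T : Finset κ} (hS : S.card ≤ s) (hT : T.card ≤ t) (u : ι → ℝ) (v : κ → ℝ) :
    |∑ i ∈ S, ∑ j ∈ T, u i * (∑ a, Ψ_L a i * Ψ_R a j) * v j|
      ≤ δ * √(∑ i ∈ S, u i ^ 2) * √(∑ j ∈ T, v j ^ 2) := by
  classical
  have key := hRIP.abs_dotProduct_mulVec_le_mul_sqrt
    (u := fun i => if i ∈ S then u i else 0) (v := fun j => if j ∈ T then v j else 0)
    ((card_le_card fun i hi => by by_contra h; simp [h] at hi).trans hS)
    ((card_le_card fun j hj => by by_contra h; simp [h] at hj).trans hT)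
  rw [← sum_sum_mul_gram_mul_eq_dotProduct] at key
  simpa [dotProduct, ite_mul, mul_ite, sum_ite_mem, sq] using key

end RIP

lemma sum_sum_of_partition {ι α M : Type*} [Fintype ι] [Fintype α] [DecidableEq α]
    [AddCommMonoid M] {I : ι → Finset α} (hdisj : ∀ p q, p ≠ q → Disjoint (I p) (I q))
    (hunion : univ.biUnion I = univ) (f : α → M) :
    ∑ p, ∑ i ∈ I p, f i = ∑ i, f i := by
  rw [← sum_biUnion fun p _ q _ hpq => hdisj p q hpq, hunion]

theorem rip_block_diagonal_bound_general {m n s r : ℕ} {δ : ℝ} (hδ : 0 < δ)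
    (Ψ_L Ψ_R : Matrix (Fin m) (Fin n) ℝ)
    (hRIP : HasRIP (Matrix.fromCols Ψ_L Ψ_R) (2 * s) δ)
    (x y : Fin n → ℝ) (I J : Fin r → Finset (Fin n))
    (hIdisj : ∀ p q, p ≠ q → Disjoint (I p) (I q))
    (hJdisj : ∀ p q, p ≠ q → Disjoint (J p) (J q))
    (hIunion : Finset.univ.biUnion I = Finset.univ)
    (hJunion : Finset.univ.biUnion J = Finset.univ)
    (hIcard : ∀ p, (I p).card ≤ s)
    (hJcard : ∀ p, (J p).card ≤ s)
    (d : Fin n → ℝ) (hd : ∀ i, d i = 1 ∨ d i = -1) :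
    |∑ p, ∑ i ∈ I p, ∑ j ∈ J p,
        d i * x i * (∑ a, Ψ_L a i * Ψ_R a j) * y j * d j|
      ≤ δ * Real.sqrt (∑ i, x i ^ 2) * Real.sqrt (∑ i, y i ^ 2) := by
  rw [two_mul] at hRIP
  have hd2 : ∀ i, d i ^ 2 = 1 := fun i => by rcases hd i with h | h <;> simp [h]
  have hblock : ∀ p, |∑ i ∈ I p, ∑ j ∈ J p, d i * x i * (∑ a, Ψ_L a i * Ψ_R a j) * y j * d j|
      ≤ δ * (√(∑ i ∈ I p, x i ^ 2) * √(∑ j ∈ J p, y j ^ 2)) := fun p => by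
    have h := hRIP.abs_sum_sum_le (hIcard p) (hJcard p) (fun i => d i * x i) (fun j => y j * d j)
    simpa only [mul_pow, hd2, one_mul, mul_one, mul_assoc] using h
  calc _ ≤ ∑ p, |∑ i ∈ I p, ∑ j ∈ J p, d i * x i * (∑ a, Ψ_L a i * Ψ_R a j) * y j * d j| :=
        abs_sum_le_sum_abs _ _
    _ ≤ δ * ∑ p, √(∑ i ∈ I p, x i ^ 2) * √(∑ j ∈ J p, y j ^ 2) := by
        rw [mul_sum]; exact sum_le_sum fun p _ => hblock p
    _ ≤ δ * (√(∑ p, ∑ i ∈ I p, x i ^ 2) * √(∑ p, ∑ j ∈ J p, y j ^ 2)) := by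
        gcongr
        exact Real.sum_sqrt_mul_sqrt_le _ (fun p => by positivity) fun p => by positivity
    _ = _ := by rw [sum_sum_of_partition hIdisj hIunion, sum_sum_of_partition hJdisj hJunion,
        mul_assoc]

/-- For `Ψ = (Ψ_L, Ψ_R)` with the `(2s, δ)`-RIP, sorted block partitions `I₁,…,I_r` (for `x`) and
`J₁,…,J_r` (for `y`) with blocks of size at most `s`, and any sign vector `d ∈ {-1,1}^n`, the
block-diagonal quadratic quantity
`w = Σ_p d(I_p)ᵀ D_{x(I_p)} Ψ_L(:,I_p)ᵀ Ψ_R(:,J_p) D_{y(J_p)} d(J_p)`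
satisfies `|w| ≤ δ ‖x‖₂ ‖y‖₂`. -/
theorem rip_block_diagonal_bound {m n s r : ℕ} {δ : ℝ} (hδ : 0 < δ) (hδ1 : δ < 1) (hs : 0 < s)
    (Ψ_L Ψ_R : Matrix (Fin m) (Fin n) ℝ)
    (hRIP : HasRIP (Matrix.fromCols Ψ_L Ψ_R) (2 * s) δ)
    (x y : Fin n → ℝ) (I J : Fin r → Finset (Fin n))
    (hIdisj : ∀ p q, p ≠ q → Disjoint (I p) (I q))
    (hJdisj : ∀ p q, p ≠ q → Disjoint (J p) (J q))
    (hIunion : Finset.univ.biUnion I = Finset.univ)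
    (hJunion : Finset.univ.biUnion J = Finset.univ)
    (hIcard : ∀ p, (I p).card ≤ s)
    (hJcard : ∀ p, (J p).card ≤ s)
    (hIsorted : ∀ p q : Fin r, p < q → ∀ i ∈ I p, ∀ j ∈ I q, |x j| ≤ |x i|)
    (hJsorted : ∀ p q : Fin r, p < q → ∀ i ∈ J p, ∀ j ∈ J q, |y j| ≤ |y i|)
    (d : Fin n → ℝ) (hd : ∀ i, d i = 1 ∨ d i = -1) :
    |∑ p, ∑ i ∈ I p, ∑ j ∈ J p,
        d i * x i * (∑ a, Ψ_L a i * Ψ_R a j) * y j * d j|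
      ≤ δ * Real.sqrt (∑ i, x i ^ 2) * Real.sqrt (∑ i, y i ^ 2) :=
  rip_block_diagonal_bound_general hδ Ψ_L Ψ_R hRIP x y I J hIdisj hJdisj hIunion hJunion hIcard
    hJcard d hd
end

section
/- Conditional decoupling via Hanson–Wright: let X ∈ ℝ^{n×n} be a random matrix, y₁, y₂ ∈ ℝ^n positive vectors, and τ, β > 0 with β < 1/n² such that Pr(|x(i,j)| > τ·y₁(i)·y₂(j)) ≤ β for each pair (i,j). Let ξ ∈ ℝ^n be an independent Rademacher vector and t > 0 with τ ≤ t/66. Then Pr(|ξᵀXξ| > t·‖y₁‖₂·‖y₂‖₂) ≤ n²β + 2·exp(−(1/44)·(t/τ)), where the probability is over both X and ξ. -/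
/-!
On the event `G` that every entry obeys `|x i j| ≤ τ y₁ i y₂ j`, the matrix has Frobenius norm
and trace at most `σ = τ ‖y₁‖ ‖y₂‖`, and `P(X ∉ G) ≤ n² β` by the union bound. Since `X` and `ξ`
are independent, it remains to bound the Rademacher quadratic form of a fixed matrix `x ∈ G`.
Its diagonal contributes at most `σ`. For the off-diagonal chaos of a symmetric `B` with
`‖B‖_F ≤ 1/8`, averaging `exp` over the sign cube one coordinate at a time
(`cosh u ≤ exp (u²/2)`) gives `E exp (ξᵀBξ) ≤ exp (2 ‖B‖_F²)`: only the Frobenius norm enters,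
so no operator-norm bound is needed. A Chernoff bound with `B = (x + xᵀ)/(16σ)` gives the tail
`2 exp (1/32 - (r - 1)/8)` at level `rσ`, which is at most `2 exp (-r/44)` for `r = t/τ ≥ 66`.
-/

namespace HansonWright

open Finset Matrix Real MeasureTheory ProbabilityTheory
open scoped ENNReal

variable {ι : Type*}

def boolSign (b : Bool) : ℝ := if b then 1 else -1

@[simp] lemma boolSign_true : boolSign true = 1 := rfl

@[simp] lemma boolSign_false : boolSign false = -1 := rfl

lemma boolSign_mul_self (b : Bool) : boolSign b * boolSign b = 1 := by
  cases b <;> simp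

section offDiagonal

variable [DecidableEq ι]

def offDiagForm (B : Matrix ι ι ℝ) (s : Finset ι) (ε : ι → Bool) : ℝ :=
  ∑ i ∈ s, ∑ j ∈ s.erase i, B i j * boolSign (ε i) * boolSign (ε j)

lemma offDiagForm_add (B C : Matrix ι ι ℝ) (s : Finset ι) (ε : ι → Bool) :
    offDiagForm (B + C) s ε = offDiagForm B s ε + offDiagForm C s ε := by
  simp only [offDiagForm, Matrix.add_apply, add_mul, sum_add_distrib]

lemma offDiagForm_smul (c : ℝ) (B : Matrix ι ι ℝ) (s : Finset ι) (ε : ι → Bool) :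
    offDiagForm (c • B) s ε = c * offDiagForm B s ε := by
  simp only [offDiagForm, Matrix.smul_apply, smul_eq_mul, mul_sum, mul_assoc]

lemma offDiagForm_neg (B : Matrix ι ι ℝ) (s : Finset ι) (ε : ι → Bool) :
    offDiagForm (-B) s ε = -offDiagForm B s ε := by
  simpa using offDiagForm_smul (-1) B s ε

lemma offDiagForm_transpose [Fintype ι] (B : Matrix ι ι ℝ) (ε : ι → Bool) :
    offDiagForm Bᵀ univ ε = offDiagForm B univ ε := by
  have h (C : Matrix ι ι ℝ) : offDiagForm C univ ε
      = ∑ i, ∑ j, C i j * boolSign (ε i) * boolSign (ε j)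
        - ∑ i, C i i * boolSign (ε i) * boolSign (ε i) := by
    simp only [offDiagForm, ← sum_sub_distrib, sum_erase_eq_sub (mem_univ _)]
  rw [h, h, sum_comm]
  simp only [transpose_apply, mul_right_comm]

lemma offDiagForm_update_of_notMem (B : Matrix ι ι ℝ) {s : Finset ι} {k : ι} (hk : k ∉ s)
    (ε : ι → Bool) (c : Bool) :
    offDiagForm B s (Function.update ε k c) = offDiagForm B s ε := by
  refine sum_congr rfl fun i hi => sum_congr rfl fun j hj => ?_
  rw [Function.update_of_ne (ne_of_mem_of_not_mem hi hk),
    Function.update_of_ne (ne_of_mem_of_not_mem (mem_of_mem_erase hj) hk)]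

lemma offDiagForm_insert {B : Matrix ι ι ℝ} (hB : B.IsSymm) {s : Finset ι} {k : ι} (hk : k ∉ s)
    (ε : ι → Bool) :
    offDiagForm B (insert k s) ε
      = offDiagForm B s ε + 2 * boolSign (ε k) * ∑ j ∈ s, B k j * boolSign (ε j) := by
  have hrow (i) (hi : i ∈ s) : ∑ j ∈ (insert k s).erase i, B i j * boolSign (ε i) * boolSign (ε j)
      = B k i * boolSign (ε i) * boolSign (ε k)
        + ∑ j ∈ s.erase i, B i j * boolSign (ε i) * boolSign (ε j) := by
    rw [erase_insert_of_ne (ne_of_mem_of_not_mem hi hk).symm,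
      sum_insert fun h => hk (mem_of_mem_erase h), hB.apply]
  have hcol : ∑ j ∈ s, B k j * boolSign (ε j) * boolSign (ε k)
      = boolSign (ε k) * ∑ j ∈ s, B k j * boolSign (ε j) := by
    rw [mul_sum]; exact sum_congr rfl fun j _ => by ring
  have hrowk : ∑ j ∈ s, B k j * boolSign (ε k) * boolSign (ε j)
      = boolSign (ε k) * ∑ j ∈ s, B k j * boolSign (ε j) := by
    rw [mul_sum]; exact sum_congr rfl fun j _ => by ring
  rw [offDiagForm, sum_insert hk, erase_insert hk, sum_congr rfl hrow, sum_add_distrib,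
    ← offDiagForm, hcol, hrowk]
  ring

lemma sq_sum_mul_boolSign (c : ι → ℝ) (s : Finset ι) (ε : ι → Bool) :
    (∑ j ∈ s, c j * boolSign (ε j)) ^ 2
      = ∑ j ∈ s, c j ^ 2 + offDiagForm (vecMulVec c c) s ε := by
  rw [sq, sum_mul_sum, offDiagForm, ← sum_add_distrib]
  refine sum_congr rfl fun i hi => ?_
  rw [← add_sum_erase _ _ hi]
  congr 1
  · linear_combination c i ^ 2 * boolSign_mul_self (ε i)
  · exact sum_congr rfl fun j _ => by rw [vecMulVec_apply]; ring

lemma sum_update_true_add_update_false [Fintype ι] (f : (ι → Bool) → ℝ) (k : ι) :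
    ∑ ε, (f (Function.update ε k true) + f (Function.update ε k false)) = 2 * ∑ ε, f ε := by
  have hflip : ∑ ε, f (Function.update ε k (!ε k)) = ∑ ε, f ε :=
    Function.Involutive.bijective (f := fun ε => Function.update ε k (!ε k))
      (fun ε => by simp) |>.sum_comp f
  have hpair (ε : ι → Bool) : f (Function.update ε k true) + f (Function.update ε k false)
      = f ε + f (Function.update ε k (!ε k)) := by
    have (b : Bool) : f (Function.update ε k true) + f (Function.update ε k false)
        = f (Function.update ε k b) + f (Function.update ε k (!b)) := by
      cases b <;> simp [add_comm]
    rw [this (ε k), Function.update_eq_self]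
  simp only [hpair, sum_add_distrib, hflip]
  ring

/-- Summing out the sign of `k` costs `cosh (2L) ≤ exp (2L²)` with `L = ∑ j ∈ s, B k j ε_j`, and
`L²` is again a quadratic form in the remaining signs. -/
lemma sum_exp_offDiagForm_insert_le [Fintype ι] {B : Matrix ι ι ℝ} (hB : B.IsSymm)
    {s : Finset ι} {k : ι} (hk : k ∉ s) :
    ∑ ε, exp (offDiagForm B (insert k s) ε)
      ≤ exp (2 * ∑ j ∈ s, B k j ^ 2)
        * ∑ ε, exp (offDiagForm (B + (2 : ℝ) • vecMulVec (B k) (B k)) s ε) := by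
  have hstep (ε : ι → Bool) : exp (offDiagForm B (insert k s) (Function.update ε k true))
      + exp (offDiagForm B (insert k s) (Function.update ε k false))
      ≤ 2 * (exp (2 * ∑ j ∈ s, B k j ^ 2)
        * exp (offDiagForm (B + (2 : ℝ) • vecMulVec (B k) (B k)) s ε)) := by
    set L := ∑ j ∈ s, B k j * boolSign (ε j)
    have hL (c : Bool) : offDiagForm B (insert k s) (Function.update ε k c)
        = offDiagForm B s ε + 2 * boolSign c * L := by
      rw [offDiagForm_insert hB hk, offDiagForm_update_of_notMem B hk, Function.update_self]
      congr 2
      exact sum_congr rfl fun j hj => by rw [Function.update_of_ne (ne_of_mem_of_not_mem hj hk)]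
    have hsq : 2 * L ^ 2 = 2 * ∑ j ∈ s, B k j ^ 2
        + offDiagForm ((2 : ℝ) • vecMulVec (B k) (B k)) s ε := by
      rw [sq_sum_mul_boolSign, offDiagForm_smul]; ring
    calc exp (offDiagForm B (insert k s) (Function.update ε k true))
          + exp (offDiagForm B (insert k s) (Function.update ε k false))
        = 2 * exp (offDiagForm B s ε) * cosh (2 * L) := by
          rw [hL, hL, cosh_eq]
          simp only [boolSign_true, boolSign_false, mul_neg, mul_one, neg_mul, exp_add, exp_neg]
          ring
      _ ≤ 2 * exp (offDiagForm B s ε) * exp ((2 * L) ^ 2 / 2) := by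
          gcongr; exact cosh_le_exp_half_sq _
      _ = 2 * (exp (2 * ∑ j ∈ s, B k j ^ 2)
            * exp (offDiagForm (B + (2 : ℝ) • vecMulVec (B k) (B k)) s ε)) := by
          rw [offDiagForm_add, mul_assoc, ← exp_add, ← exp_add]
          congr 2
          linear_combination hsq
  have := sum_le_sum fun ε (_ : ε ∈ univ) => hstep ε
  rw [sum_update_true_add_update_false (fun ε => exp (offDiagForm B (insert k s) ε)) k,
    ← mul_sum, ← mul_sum] at this
  linarith

lemma sum_sq_add_rankOne_le {B : Matrix ι ι ℝ} (hB : B.IsSymm) {s : Finset ι} {k : ι}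
    (hk : k ∉ s) (hsmall : ∑ i ∈ insert k s, ∑ j ∈ insert k s, B i j ^ 2 ≤ 1 / 64) :
    ∑ j ∈ s, B k j ^ 2 + ∑ i ∈ s, ∑ j ∈ s, (B + (2 : ℝ) • vecMulVec (B k) (B k)) i j ^ 2
      ≤ ∑ i ∈ insert k s, ∑ j ∈ insert k s, B i j ^ 2 := by
  set A := ∑ i ∈ s, ∑ j ∈ s, B i j ^ 2
  set b := ∑ j ∈ s, B k j ^ 2
  set C := ∑ i ∈ s, ∑ j ∈ s, B i j * (B k i * B k j)
  have hA : 0 ≤ A := by positivity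
  have hb : 0 ≤ b := by positivity
  have hinsert : ∑ i ∈ insert k s, ∑ j ∈ insert k s, B i j ^ 2 = B k k ^ 2 + 2 * b + A := by
    simp only [sum_insert hk, sum_add_distrib, hB.apply k]
    ring
  have hupdate : ∑ i ∈ s, ∑ j ∈ s, (B + (2 : ℝ) • vecMulVec (B k) (B k)) i j ^ 2
      = A + 4 * C + 4 * b ^ 2 := by
    have hterm (i j : ι) : (B + (2 : ℝ) • vecMulVec (B k) (B k)) i j ^ 2
        = B i j ^ 2 + 4 * (B i j * (B k i * B k j)) + 4 * (B k i ^ 2 * B k j ^ 2) := by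
      simp only [Matrix.add_apply, Matrix.smul_apply, vecMulVec_apply, smul_eq_mul]
      ring
    have hb2 : b ^ 2 = ∑ i ∈ s, ∑ j ∈ s, B k i ^ 2 * B k j ^ 2 := by rw [sq, sum_mul_sum]
    simp only [hterm, sum_add_distrib, ← mul_sum, hb2]
    rfl
  have hCS : C ^ 2 ≤ A * b ^ 2 := by
    have := sum_mul_sq_le_sq_mul_sq (s ×ˢ s) (fun p => B p.1 p.2) (fun p => B k p.1 * B k p.2)
    simp only [sum_product, mul_pow] at this
    simpa only [A, C, b, sq, sum_mul_sum] using this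
  have hC : C ≤ b / 8 := by nlinarith [sq_nonneg (C - b / 8)]
  rw [hinsert, hupdate]
  nlinarith [sq_nonneg (B k k)]

/-- Removing a coordinate replaces `B` by the rank-one update `B + 2 bbᵀ` of its remaining block,
whose squared Frobenius norm is smaller by at least `‖b‖²` (`sum_sq_add_rankOne_le`), so the
factors `exp (2 ‖b‖²)` telescope. -/
lemma sum_exp_offDiagForm_le [Fintype ι] (s : Finset ι) {B : Matrix ι ι ℝ} (hB : B.IsSymm)
    (hsmall : ∑ i ∈ s, ∑ j ∈ s, B i j ^ 2 ≤ 1 / 64) :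
    ∑ ε, exp (offDiagForm B s ε) ≤ 2 ^ Fintype.card ι * exp (2 * ∑ i ∈ s, ∑ j ∈ s, B i j ^ 2) := by
  induction s using Finset.induction_on generalizing B with
  | empty => simp [offDiagForm]
  | @insert k s hk ih =>
    have hB' : (B + (2 : ℝ) • vecMulVec (B k) (B k)).IsSymm :=
      hB.add (IsSymm.smul (IsSymm.ext fun i j => by simp [vecMulVec_apply, mul_comm]) _)
    have hF := sum_sq_add_rankOne_le hB hk hsmall
    have hb : 0 ≤ ∑ j ∈ s, B k j ^ 2 := by positivity
    calc ∑ ε, exp (offDiagForm B (insert k s) ε)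
        ≤ exp (2 * ∑ j ∈ s, B k j ^ 2)
          * ∑ ε, exp (offDiagForm (B + (2 : ℝ) • vecMulVec (B k) (B k)) s ε) :=
          sum_exp_offDiagForm_insert_le hB hk
      _ ≤ exp (2 * ∑ j ∈ s, B k j ^ 2) * (2 ^ Fintype.card ι * exp (2 * ∑ i ∈ s, ∑ j ∈ s,
            (B + (2 : ℝ) • vecMulVec (B k) (B k)) i j ^ 2)) := by
          gcongr; exact ih hB' (by linarith)
      _ ≤ 2 ^ Fintype.card ι * exp (2 * ∑ i ∈ insert k s, ∑ j ∈ insert k s, B i j ^ 2) := by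
          rw [mul_left_comm, ← exp_add]
          gcongr
          linarith

variable [Fintype ι]

lemma card_lt_offDiagForm_le {B : Matrix ι ι ℝ} (hB : B.IsSymm)
    (hsmall : ∑ i, ∑ j, B i j ^ 2 ≤ 1 / 64) (v : ℝ) :
    (#{ε | v < offDiagForm B univ ε} : ℝ) ≤ 2 ^ Fintype.card ι * exp (1 / 32 - v) := by
  have hmarkov :
      (#{ε | v < offDiagForm B univ ε} : ℝ) * exp v ≤ ∑ ε, exp (offDiagForm B univ ε) :=
    calc (#{ε | v < offDiagForm B univ ε} : ℝ) * exp v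
        = ∑ ε ∈ {ε | v < offDiagForm B univ ε}, exp v := by rw [sum_const, nsmul_eq_mul]
      _ ≤ ∑ ε ∈ {ε | v < offDiagForm B univ ε}, exp (offDiagForm B univ ε) :=
          sum_le_sum fun ε hε => exp_le_exp.2 (mem_filter.1 hε).2.le
      _ ≤ ∑ ε, exp (offDiagForm B univ ε) :=
          sum_le_sum_of_subset_of_nonneg (subset_univ _) fun _ _ _ => (exp_pos _).le
  have hmgf : ∑ ε, exp (offDiagForm B univ ε) ≤ 2 ^ Fintype.card ι * exp (1 / 32) :=
    (sum_exp_offDiagForm_le univ hB hsmall).trans (by gcongr; linarith)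
  calc (#{ε | v < offDiagForm B univ ε} : ℝ)
      = #{ε | v < offDiagForm B univ ε} * exp v * exp (-v) := by
        rw [mul_assoc, ← exp_add, add_neg_cancel, exp_zero, mul_one]
    _ ≤ 2 ^ Fintype.card ι * exp (1 / 32) * exp (-v) :=
        mul_le_mul_of_nonneg_right (hmarkov.trans hmgf) (exp_pos _).le
    _ = 2 ^ Fintype.card ι * exp (1 / 32 - v) := by rw [sub_eq_add_neg, exp_add, mul_assoc]

lemma card_lt_abs_offDiagForm_le {a : Matrix ι ι ℝ} {σ : ℝ} (hσ : 0 < σ)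
    (ha : ∑ i, ∑ j, a i j ^ 2 ≤ σ ^ 2) (v : ℝ) :
    (#{ε | v < |offDiagForm a univ ε|} : ℝ)
      ≤ 2 ^ Fintype.card ι * (2 * exp (1 / 32 - v / (8 * σ))) := by
  set B := (16 * σ)⁻¹ • (a + aᵀ)
  have hB : B.IsSymm := (isSymm_add_transpose_self a).smul _
  have hQ (ε : ι → Bool) : offDiagForm B univ ε = offDiagForm a univ ε / (8 * σ) := by
    rw [offDiagForm_smul, offDiagForm_add, offDiagForm_transpose]
    field_simp
    ring
  have hsmall : ∑ i, ∑ j, B i j ^ 2 ≤ 1 / 64 := by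
    have hterm (i j : ι) : B i j ^ 2 ≤ (128 * σ ^ 2)⁻¹ * (a i j ^ 2 + a j i ^ 2) := by
      simp only [B, Matrix.smul_apply, Matrix.add_apply, transpose_apply, smul_eq_mul]
      field_simp
      nlinarith [mul_nonneg (sq_nonneg σ) (sq_nonneg (a i j - a j i))]
    calc ∑ i, ∑ j, B i j ^ 2 ≤ ∑ i, ∑ j, (128 * σ ^ 2)⁻¹ * (a i j ^ 2 + a j i ^ 2) :=
          sum_le_sum fun i _ => sum_le_sum fun j _ => hterm i j
      _ = (128 * σ ^ 2)⁻¹ * (2 * ∑ i, ∑ j, a i j ^ 2) := by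
          simp only [← mul_sum, sum_add_distrib]
          rw [sum_comm (f := fun i j => a j i ^ 2)]
          ring
      _ ≤ (128 * σ ^ 2)⁻¹ * (2 * σ ^ 2) := by gcongr
      _ = 1 / 64 := by field_simp; norm_num
  have hsplit : #{ε | v < |offDiagForm a univ ε|}
      ≤ #{ε | v / (8 * σ) < offDiagForm B univ ε}
        + #{ε | v / (8 * σ) < offDiagForm (-B) univ ε} := by
    refine (card_le_card fun ε hε => ?_).trans (card_union_le _ _)
    simp only [mem_filter, mem_univ, true_and, mem_union, offDiagForm_neg, hQ] at hε ⊢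
    rcases lt_abs.1 hε with h | h
    · exact Or.inl (by gcongr)
    · right; rw [← neg_div]; gcongr
  calc (#{ε | v < |offDiagForm a univ ε|} : ℝ)
      ≤ #{ε | v / (8 * σ) < offDiagForm B univ ε}
        + #{ε | v / (8 * σ) < offDiagForm (-B) univ ε} := by
        exact_mod_cast hsplit
    _ ≤ 2 ^ Fintype.card ι * exp (1 / 32 - v / (8 * σ))
        + 2 ^ Fintype.card ι * exp (1 / 32 - v / (8 * σ)) :=
        add_le_add (card_lt_offDiagForm_le hB hsmall _)
          (card_lt_offDiagForm_le hB.neg (by simpa only [Matrix.neg_apply, neg_sq] using hsmall) _)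
    _ = 2 ^ Fintype.card ι * (2 * exp (1 / 32 - v / (8 * σ))) := by ring

lemma sum_boolSign_mul_mul_boolSign (x : Matrix ι ι ℝ) (ε : ι → Bool) :
    ∑ i, ∑ j, boolSign (ε i) * x i j * boolSign (ε j) = x.trace + offDiagForm x univ ε := by
  rw [trace, offDiagForm, ← sum_add_distrib]
  refine sum_congr rfl fun i _ => ?_
  rw [← add_sum_erase _ _ (mem_univ i)]
  congr 1
  · rw [diag_apply]; linear_combination x i i * boolSign_mul_self (ε i)
  · exact sum_congr rfl fun j _ => by ring

lemma card_lt_abs_quadForm_le {x : Matrix ι ι ℝ} {σ : ℝ} (hσ : 0 ≤ σ)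
    (hx : ∑ i, ∑ j, x i j ^ 2 ≤ σ ^ 2) (htr : |x.trace| ≤ σ) (r : ℝ) :
    (#{ε : ι → Bool | r * σ < |∑ i, ∑ j, boolSign (ε i) * x i j * boolSign (ε j)|} : ℝ)
      ≤ 2 ^ Fintype.card ι * (2 * exp (1 / 32 - (r - 1) / 8)) := by
  rcases hσ.eq_or_lt with rfl | hσ
  · have hx0 : x = 0 := by
      ext i j
      have := (single_le_sum (fun j _ => sq_nonneg (x i j)) (mem_univ j)).trans
        ((single_le_sum (fun i _ => sum_nonneg fun j _ => sq_nonneg (x i j)) (mem_univ i)).trans hx)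
      simpa using this
    simp [hx0]
    positivity
  have hsub : #{ε : ι → Bool | r * σ < |∑ i, ∑ j, boolSign (ε i) * x i j * boolSign (ε j)|}
      ≤ #{ε | (r - 1) * σ < |offDiagForm x univ ε|} := by
    refine card_le_card fun ε hε => ?_
    simp only [mem_filter, mem_univ, true_and, sum_boolSign_mul_mul_boolSign] at hε ⊢
    linarith [abs_add_le x.trace (offDiagForm x univ ε)]
  calc _ ≤ (#{ε | (r - 1) * σ < |offDiagForm x univ ε|} : ℝ) := by exact_mod_cast hsub
    _ ≤ _ := by
      convert card_lt_abs_offDiagForm_le hσ hx ((r - 1) * σ) using 5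
      field_simp

end offDiagonal

noncomputable def rademacherVector (ι : Type*) : Measure (ι → ℝ) :=
  (uniformOn (Set.univ : Set (ι → Bool))).map fun ε i => boolSign (ε i)

lemma map_boolSign_uniformOn :
    (uniformOn (Set.univ : Set Bool)).map boolSign
      = (1 / 2 : ℝ≥0∞) • Measure.dirac (1 : ℝ) + (1 / 2 : ℝ≥0∞) • Measure.dirac (-1 : ℝ) := by
  have huniform : uniformOn (Set.univ : Set Bool)
      = (1 / 2 : ℝ≥0∞) • Measure.dirac true + (1 / 2 : ℝ≥0∞) • Measure.dirac false := by
    refine Measure.ext_iff_singleton.2 fun b => ?_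
    rw [uniformOn_univ]
    cases b <;> simp
  rw [huniform, Measure.map_add _ _ (measurable_of_finite _), Measure.map_smul, Measure.map_smul,
    Measure.map_dirac' (measurable_of_finite _), Measure.map_dirac' (measurable_of_finite _)]
  rfl

lemma uniformOn_le_ofReal_of_card_le {α : Type*} [Fintype α] [MeasurableSpace α]
    [MeasurableSingletonClass α] (p : α → Prop) [DecidablePred p] {c : ℝ}
    (h : (#{a | p a} : ℝ) ≤ Fintype.card α * c) :
    uniformOn (Set.univ : Set α) {a | p a} ≤ ENNReal.ofReal c := by
  rcases isEmpty_or_nonempty α with hα | hα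
  · simp [Set.eq_empty_of_isEmpty]
  have hcard : (0 : ℝ) < Fintype.card α := by exact_mod_cast Fintype.card_pos
  rw [uniformOn_univ, ← coe_filter_univ, Measure.count_apply_finset,
    ENNReal.div_le_iff (by positivity) (by simp), ← ENNReal.ofReal_natCast,
    ← ENNReal.ofReal_natCast, ← ENNReal.ofReal_mul' hcard.le, mul_comm]
  exact ENNReal.ofReal_le_ofReal h

section

variable [Fintype ι]

lemma abs_trace_le_of_abs_le {x : Matrix ι ι ℝ} {τ : ℝ} (hτ : 0 ≤ τ) {y₁ y₂ : ι → ℝ}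
    (hx : ∀ i j, |x i j| ≤ τ * y₁ i * y₂ j) :
    |x.trace| ≤ τ * (√(∑ i, y₁ i ^ 2) * √(∑ i, y₂ i ^ 2)) :=
  calc |x.trace| ≤ ∑ i, |x i i| := abs_sum_le_sum_abs _ _
    _ ≤ ∑ i, τ * (y₁ i * y₂ i) := sum_le_sum fun i _ => (hx i i).trans_eq (mul_assoc _ _ _)
    _ ≤ τ * (√(∑ i, y₁ i ^ 2) * √(∑ i, y₂ i ^ 2)) := by
      rw [← mul_sum]; gcongr; exact sum_mul_le_sqrt_mul_sqrt _ _ _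

lemma sum_sq_le_of_abs_le {x : Matrix ι ι ℝ} {τ : ℝ} {y₁ y₂ : ι → ℝ}
    (hx : ∀ i j, |x i j| ≤ τ * y₁ i * y₂ j) :
    ∑ i, ∑ j, x i j ^ 2 ≤ (τ * (√(∑ i, y₁ i ^ 2) * √(∑ i, y₂ i ^ 2))) ^ 2 := by
  rw [mul_pow, mul_pow, sq_sqrt (by positivity), sq_sqrt (by positivity), sum_mul_sum, mul_sum]
  refine sum_le_sum fun i _ => ?_
  rw [mul_sum]
  refine sum_le_sum fun j _ => ?_
  rw [← sq_abs]
  calc |x i j| ^ 2 ≤ (τ * y₁ i * y₂ j) ^ 2 := pow_le_pow_left₀ (abs_nonneg _) (hx i j) 2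
    _ = τ ^ 2 * (y₁ i ^ 2 * y₂ j ^ 2) := by ring

lemma rademacherVector_lt_abs_quadForm_le {x : Matrix ι ι ℝ} {σ : ℝ} (hσ : 0 ≤ σ)
    (hx : ∑ i, ∑ j, x i j ^ 2 ≤ σ ^ 2) (htr : |x.trace| ≤ σ) (r : ℝ) :
    rademacherVector ι {e | r * σ < |∑ i, ∑ j, e i * x i j * e j|}
      ≤ ENNReal.ofReal (2 * exp (1 / 32 - (r - 1) / 8)) := by
  classical
  rw [rademacherVector, Measure.map_apply (measurable_of_countable _)
    (measurableSet_lt measurable_const (by fun_prop))]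
  refine uniformOn_le_ofReal_of_card_le _ ?_
  rw [Fintype.card_fun, Fintype.card_bool]
  exact_mod_cast card_lt_abs_quadForm_le hσ hx htr r

lemma map_eq_rademacherVector {Ω : Type*} [MeasurableSpace Ω] {μ : Measure Ω}
    [IsProbabilityMeasure μ] {ξ : Ω → ι → ℝ} (hξ : Measurable ξ)
    (hindep : iIndepFun (fun i ω => ξ ω i) μ)
    (hlaw : ∀ i, μ.map (fun ω => ξ ω i) =
      (1 / 2 : ℝ≥0∞) • Measure.dirac (1 : ℝ) + (1 / 2 : ℝ≥0∞) • Measure.dirac (-1 : ℝ)) :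
    μ.map ξ = rademacherVector ι := by
  classical
  rw [(iIndepFun_iff_map_fun_eq_pi_map fun i => hξ.eval.aemeasurable).1 hindep, rademacherVector]
  simp only [hlaw, ← map_boolSign_uniformOn]
  rw [← Measure.pi_map_pi fun _ => (measurable_of_finite _).aemeasurable, ← uniformOn_pi,
    Set.pi_univ]

end

lemma measure_mem_le_of_indepFun {Ω α β : Type*} [MeasurableSpace Ω]
    [MeasurableSpace α] [MeasurableSpace β] {μ : Measure Ω} [IsProbabilityMeasure μ]
    {X : Ω → α} {Y : Ω → β} (hX : Measurable X) (hY : Measurable Y) (hXY : IndepFun X Y μ)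
    {G : Set α} (hG : MeasurableSet G) {S : Set (α × β)} (hS : MeasurableSet S) {c : ℝ≥0∞}
    (hc : ∀ x ∈ G, μ.map Y (Prod.mk x ⁻¹' S) ≤ c) :
    μ {ω | (X ω, Y ω) ∈ S} ≤ μ {ω | X ω ∉ G} + c := by
  have hgood : μ ((fun ω => (X ω, Y ω)) ⁻¹' (S ∩ G ×ˢ Set.univ)) ≤ c := by
    have := Measure.isProbabilityMeasure_map (μ := μ) hX.aemeasurable
    have hSG : MeasurableSet (S ∩ G ×ˢ Set.univ) := hS.inter (hG.prod .univ)
    rw [← Measure.map_apply (hX.prodMk hY) hSG,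
      (indepFun_iff_map_prod_eq_prod_map_map hX.aemeasurable hY.aemeasurable).1 hXY,
      Measure.prod_apply hSG]
    calc ∫⁻ x, μ.map Y (Prod.mk x ⁻¹' (S ∩ G ×ˢ Set.univ)) ∂μ.map X
        ≤ ∫⁻ _, c ∂μ.map X := lintegral_mono fun x => by
          by_cases hx : x ∈ G
          · exact (measure_mono fun y hy => hy.1).trans (hc x hx)
          · simp [hx]
      _ = c := by simp
  calc μ {ω | (X ω, Y ω) ∈ S}
      ≤ μ ({ω | X ω ∉ G} ∪ (fun ω => (X ω, Y ω)) ⁻¹' (S ∩ G ×ˢ Set.univ)) :=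
        measure_mono fun ω hω => by by_cases hx : X ω ∈ G <;> simp_all
    _ ≤ μ {ω | X ω ∉ G} + c := (measure_union_le _ _).trans (by gcongr)

lemma measure_not_forall_abs_le {Ω ι κ : Type*} [MeasurableSpace Ω] [Fintype ι] [Fintype κ]
    {μ : Measure Ω} {f : Ω → ι → κ → ℝ} {b : ι → κ → ℝ} {β : ℝ}
    (h : ∀ i j, μ {ω | b i j < |f ω i j|} ≤ ENNReal.ofReal β) :
    μ {ω | ¬ ∀ i j, |f ω i j| ≤ b i j}
      ≤ ENNReal.ofReal (Fintype.card ι * Fintype.card κ * β) := by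
  have hunion : {ω | ¬ ∀ i j, |f ω i j| ≤ b i j} = ⋃ i, ⋃ j, {ω | b i j < |f ω i j|} := by
    ext ω; simp
  calc μ {ω | ¬ ∀ i j, |f ω i j| ≤ b i j} ≤ ∑ i, ∑ j, μ {ω | b i j < |f ω i j|} := by
        rw [hunion]
        exact (measure_iUnion_fintype_le _ _).trans
          (sum_le_sum fun i _ => measure_iUnion_fintype_le _ _)
    _ ≤ ∑ _ : ι, ∑ _ : κ, ENNReal.ofReal β := by gcongr with i _ j _; exact h i j
    _ = ENNReal.ofReal (Fintype.card ι * Fintype.card κ * β) := by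
        simp [ENNReal.ofReal_mul, mul_assoc]

end HansonWright

open MeasureTheory ProbabilityTheory
open scoped ENNReal

theorem conditional_hanson_wright_general {Ω : Type*} [MeasurableSpace Ω] (μ : Measure Ω)
    [IsProbabilityMeasure μ] {n : ℕ}
    (X : Ω → Fin n → Fin n → ℝ) (ξ : Ω → Fin n → ℝ)
    (hXmeas : Measurable X) (hξmeas : Measurable ξ)
    (y₁ y₂ : Fin n → ℝ)
    {τ β t : ℝ} (hτ : 0 < τ) (hβ : 0 < β)
    (htail : ∀ i j, μ {ω | τ * y₁ i * y₂ j < |X ω i j|} ≤ ENNReal.ofReal β)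
    (hξindep : iIndepFun (fun i ω => ξ ω i) μ)
    (hξlaw : ∀ i, μ.map (fun ω => ξ ω i) =
      (1 / 2 : ℝ≥0∞) • Measure.dirac (1 : ℝ) + (1 / 2 : ℝ≥0∞) • Measure.dirac (-1 : ℝ))
    (hXξ : IndepFun X ξ μ)
    (hτt : τ ≤ t / 66) :
    μ {ω | t * Real.sqrt (∑ i, y₁ i ^ 2) * Real.sqrt (∑ i, y₂ i ^ 2)
          < |∑ i, ∑ j, ξ ω i * X ω i j * ξ ω j|}
      ≤ ENNReal.ofReal ((n : ℝ) ^ 2 * β + 2 * Real.exp (-(1 / 44) * (t / τ))) := by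
  set σ := τ * (Real.sqrt (∑ i, y₁ i ^ 2) * Real.sqrt (∑ i, y₂ i ^ 2))
  set G : Set (Fin n → Fin n → ℝ) := {x | ∀ i j, |x i j| ≤ τ * y₁ i * y₂ j}
  set S : Set ((Fin n → Fin n → ℝ) × (Fin n → ℝ)) :=
    {p | t * Real.sqrt (∑ i, y₁ i ^ 2) * Real.sqrt (∑ i, y₂ i ^ 2)
      < |∑ i, ∑ j, p.2 i * p.1 i j * p.2 j|}
  have hG : MeasurableSet G := by
    simp only [G, Set.ofPred_forall]
    exact .iInter fun i => .iInter fun j => measurableSet_le (by fun_prop) measurable_const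
  have hS : MeasurableSet S := measurableSet_lt measurable_const (by fun_prop)
  have hbad : μ {ω | X ω ∉ G} ≤ ENNReal.ofReal ((n : ℝ) ^ 2 * β) :=
    (HansonWright.measure_not_forall_abs_le htail).trans_eq (by rw [Fintype.card_fin, sq])
  have hr : 66 ≤ t / τ := by rw [le_div_iff₀ hτ]; linarith
  have hgood (x) (hx : x ∈ G) :
      μ.map ξ (Prod.mk x ⁻¹' S) ≤ ENNReal.ofReal (2 * Real.exp (-(1 / 44) * (t / τ))) := by
    have hσ : t * Real.sqrt (∑ i, y₁ i ^ 2) * Real.sqrt (∑ i, y₂ i ^ 2) = t / τ * σ := by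
      simp only [σ]; field_simp
    simp only [S, Set.preimage_ofPred_eq, hσ]
    rw [HansonWright.map_eq_rademacherVector hξmeas hξindep hξlaw]
    refine (HansonWright.rademacherVector_lt_abs_quadForm_le (by positivity)
      (HansonWright.sum_sq_le_of_abs_le hx) (HansonWright.abs_trace_le_of_abs_le hτ.le hx)
      _).trans ?_
    gcongr
    linarith
  calc μ {ω | (X ω, ξ ω) ∈ S}
      ≤ μ {ω | X ω ∉ G} + ENNReal.ofReal (2 * Real.exp (-(1 / 44) * (t / τ))) :=
        HansonWright.measure_mem_le_of_indepFun hXmeas hξmeas hXξ hG hS hgood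
    _ ≤ ENNReal.ofReal ((n : ℝ) ^ 2 * β)
          + ENNReal.ofReal (2 * Real.exp (-(1 / 44) * (t / τ))) := by
        gcongr
    _ = _ := (ENNReal.ofReal_add (by positivity) (by positivity)).symm

/-- Conditional decoupling via Hanson–Wright: if each entry of a random matrix `X` satisfies
`Pr(|X(i,j)| > τ y₁(i) y₂(j)) ≤ β` and `ξ` is an independent Rademacher vector, then for
`t > 0` with `τ ≤ t/66`,
`Pr(|ξᵀ X ξ| > t ‖y₁‖₂ ‖y₂‖₂) ≤ n² β + 2 exp(−(1/44)(t/τ))`. -/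
theorem conditional_hanson_wright {Ω : Type*} [MeasurableSpace Ω] (μ : Measure Ω)
    [IsProbabilityMeasure μ] {n : ℕ}
    (X : Ω → Fin n → Fin n → ℝ) (ξ : Ω → Fin n → ℝ)
    (hXmeas : Measurable X) (hξmeas : Measurable ξ)
    (y₁ y₂ : Fin n → ℝ) (hy₁ : ∀ i, 0 < y₁ i) (hy₂ : ∀ i, 0 < y₂ i)
    {τ β t : ℝ} (hτ : 0 < τ) (hβ : 0 < β) (hβn : β < 1 / (n : ℝ) ^ 2)
    (htail : ∀ i j, μ {ω | τ * y₁ i * y₂ j < |X ω i j|} ≤ ENNReal.ofReal β)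
    (hξindep : iIndepFun (fun i ω => ξ ω i) μ)
    (hξlaw : ∀ i, μ.map (fun ω => ξ ω i) =
      (1 / 2 : ℝ≥0∞) • Measure.dirac (1 : ℝ) + (1 / 2 : ℝ≥0∞) • Measure.dirac (-1 : ℝ))
    (hXξ : IndepFun X ξ μ)
    (ht : 0 < t) (hτt : τ ≤ t / 66) :
    μ {ω | t * Real.sqrt (∑ i, y₁ i ^ 2) * Real.sqrt (∑ i, y₂ i ^ 2)
          < |∑ i, ∑ j, ξ ω i * X ω i j * ξ ω j|}
      ≤ ENNReal.ofReal ((n : ℝ) ^ 2 * β + 2 * Real.exp (-(1 / 44) * (t / τ))) :=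
  conditional_hanson_wright_general μ X ξ hXmeas hξmeas y₁ y₂ hτ hβ htail hξindep hξlaw hXξ hτt
end
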